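/- A join P ∗ Q of two polytopes, each of dimension ≥ 1, is a pyramid if and only if P is a pyramid or Q is a pyramid. -/

import Mathlib

open Set

section Prelim

variable {E : Type*} [AddCommGroup E] [Module ℝ E] {F : Type*} [AddCommGroup F] [Module ℝ F]

/-- A polytope is the convex hull of a nonempty finite set of points. -/
def IsPolytope (P : Set E) : Prop :=
  ∃ S : Finset E, S.Nonempty ∧ P = convexHull ℝ (S : Set E)

/-- The dimension of a set: the dimension of its affine hull. -/
noncomputable def pdim (P : Set E) : ℕ :=
  Module.finrank ℝ (affineSpan ℝ P).direction

/-- The number of vertices (extreme points). -/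
noncomputable def numVertices (P : Set E) : ℕ :=
  (P.extremePoints ℝ).ncard

/-- A face of a polytope: a convex extreme subset. -/
def IsFace (P A : Set E) : Prop :=
  IsExtreme ℝ P A ∧ Convex ℝ A

/-- A facet: a face of dimension one less than the polytope. -/
def IsFacet (P A : Set E) : Prop :=
  A.Nonempty ∧ IsFace P A ∧ pdim A + 1 = pdim P

/-- The number of facets. -/
noncomputable def numFacets (P : Set E) : ℕ :=
  {A : Set E | IsFacet P A}.ncard

/-- A `k`-dimensional simplex: convex hull of `k+1` affinely independent points. -/
def IsSimplex (k : ℕ) (P : Set E) : Prop :=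
  ∃ S : Finset E, S.card = k + 1 ∧
    AffineIndependent ℝ (fun x : (S : Set E) => (x : E)) ∧
    P = convexHull ℝ (S : Set E)

/-- A pyramid: convex hull of a polytope together with a point outside its affine hull. -/
def IsPyramid (P : Set E) : Prop :=
  ∃ (Q : Set E) (v : E), IsPolytope Q ∧ v ∉ affineSpan ℝ Q ∧
    P = convexHull ℝ (Q ∪ {v})

/-- The join of two polytopes, realized in skew affine subspaces of `E × F × ℝ`. -/
def polyJoin (P : Set E) (Q : Set F) : Set (E × F × ℝ) :=
  convexHull ℝ ((fun p => (p, (0 : F), (0 : ℝ))) '' P ∪ (fun q => ((0 : E), q, (1 : ℝ))) '' Q)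

/-- Combinatorial equivalence: an inclusion-preserving bijection between the face posets. -/
def CombEquiv (P : Set E) (Q : Set F) : Prop :=
  Nonempty ({A : Set E // IsFace P A} ≃o {B : Set F // IsFace Q B})

end Prelim

/-!
An apex of a polytope is a vertex outside the affine hull of the other vertices; since a polytope
is the convex hull of its vertices, a polytope of positive dimension is a pyramid exactly when it
has an apex. In `P ∗ Q` the copy of `P` at height `0` is a face, cut out by the height coordinate,
so the vertices of the join are those of `P` and of `Q`, and an apex of the join is an apex of the
factor containing it. Conversely, if `P = conv (B ∪ {v})` then `P ∗ Q = conv ((B ∗ Q) ∪ {v})`, and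
`v` avoids the affine hull of `B ∗ Q` because the retraction `(x, y, t) ↦ x + t • p₀` (`p₀ ∈ B`)
maps that hull into `aff B`. The involution `(x, y, t) ↦ (y, x, 1 - t)` exchanges `P` and `Q`.
-/

open Set Function

section Polytopes

variable {E : Type*} [AddCommGroup E] [Module ℝ E] {F : Type*} [AddCommGroup F] [Module ℝ F]

theorem AffineMap.image_extremePoints {f : E →ᵃ[ℝ] F} (hf : Injective f) (s : Set E) :
    f '' s.extremePoints ℝ = (f '' s).extremePoints ℝ := by
  ext y
  constructor
  · rintro ⟨x, hx, rfl⟩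
    refine ⟨mem_image_of_mem f hx.1, ?_⟩
    rintro _ ⟨a, ha, rfl⟩ _ ⟨b, hb, rfl⟩ hab
    rw [← image_openSegment, hf.mem_set_image] at hab
    rw [hx.2 ha hb hab]
  · rintro ⟨⟨x, hx, rfl⟩, hy⟩
    refine ⟨x, ⟨hx, fun a ha b hb hab ↦ ?_⟩, rfl⟩
    exact hf (hy (mem_image_of_mem f ha) (mem_image_of_mem f hb)
      (image_openSegment ℝ f a b ▸ mem_image_of_mem f hab))

theorem mem_extremePoints_convexHull_insert {s : Set E} {x : E} (hx : x ∉ convexHull ℝ s) :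
    x ∈ (convexHull ℝ (insert x s)).extremePoints ℝ := by
  rcases s.eq_empty_or_nonempty with rfl | hs
  · simp
  refine ⟨subset_convexHull ℝ _ (mem_insert x s), fun y₁ hy₁ y₂ hy₂ hx' ↦ ?_⟩
  rw [convexHull_insert hs, mem_convexJoin] at hy₁ hy₂
  obtain ⟨x₁, hx₁, c₁, hc₁, a₁, b₁, ha₁, hb₁, hab₁, rfl⟩ := hy₁
  obtain ⟨x₂, hx₂, c₂, hc₂, a₂, b₂, ha₂, hb₂, hab₂, rfl⟩ := hy₂
  rw [mem_singleton_iff] at hx₁ hx₂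
  subst x₁ x₂
  obtain ⟨t, u, ht, hu, htu, hx'⟩ := hx'
  obtain rfl : a₁ = 1 - b₁ := by linarith
  obtain rfl : a₂ = 1 - b₂ := by linarith
  obtain rfl : u = 1 - t := by linarith
  -- `μ • x` is a nonnegative combination of `c₁, c₂ ∈ convexHull s`, so `μ > 0` is impossible
  set μ := t * b₁ + (1 - t) * b₂
  have hcomb : μ • x = (t * b₁) • c₁ + ((1 - t) * b₂) • c₂ := by
    linear_combination (norm := module) -hx'
  obtain hμ0 | hμpos := (by positivity : 0 ≤ μ).eq_or_lt
  · obtain ⟨htb, -⟩ := (add_eq_zero_iff_of_nonneg (by positivity) (by positivity)).1 hμ0.symm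
    obtain rfl : b₁ = 0 := (mul_eq_zero.1 htb).resolve_left ht.ne'
    simp
  · refine absurd ?_ hx
    have hx_eq : x = (t * b₁ / μ) • c₁ + ((1 - t) * b₂ / μ) • c₂ := by
      rw [div_eq_inv_mul, div_eq_inv_mul, mul_smul μ⁻¹, mul_smul μ⁻¹, ← smul_add, ← hcomb,
        inv_smul_smul₀ hμpos.ne']
    rw [hx_eq]
    exact convex_convexHull ℝ s hc₁ hc₂ (by positivity) (by positivity)
      (by rw [← add_div]; exact div_self hμpos.ne')

theorem convexHull_extremePoints_convexHull_finset (S : Finset E) :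
    convexHull ℝ ((convexHull ℝ (S : Set E)).extremePoints ℝ) = convexHull ℝ (S : Set E) := by
  classical
  induction S using Finset.strongInduction with
  | H S ih =>
  refine (convexHull_min extremePoints_subset (convex_convexHull ℝ _)).antisymm ?_
  by_cases h : ∃ x ∈ S, x ∈ convexHull ℝ (S.erase x : Set E)
  · obtain ⟨x, hxS, hx⟩ := h
    have hdrop : convexHull ℝ (S : Set E) = convexHull ℝ (S.erase x : Set E) := by
      rw [← Finset.insert_erase hxS, Finset.coe_insert,
        Finset.erase_insert (Finset.notMem_erase x S)]
      exact (convexHull_min (insert_subset hx (subset_convexHull ℝ _))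
        (convex_convexHull ℝ _)).antisymm (convexHull_mono (subset_insert _ _))
    rw [hdrop]
    exact (ih _ (Finset.erase_ssubset hxS)).ge
  · push Not at h
    refine convexHull_mono fun x hxS ↦ ?_
    rw [← Finset.insert_erase hxS, Finset.coe_insert]
    exact mem_extremePoints_convexHull_insert (h x hxS)

theorem IsPolytope.nonempty {P : Set E} (hP : IsPolytope P) : P.Nonempty := by
  obtain ⟨S, hS, rfl⟩ := hP
  exact (Finset.coe_nonempty.2 hS).convexHull

theorem IsPolytope.convex {P : Set E} (hP : IsPolytope P) : Convex ℝ P := by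
  obtain ⟨S, -, rfl⟩ := hP
  exact convex_convexHull ℝ _

def IsApex (P : Set E) (v : E) : Prop :=
  v ∈ P.extremePoints ℝ ∧ v ∉ affineSpan ℝ (P.extremePoints ℝ \ {v})

theorem IsPyramid.exists_isApex {P : Set E} (h : IsPyramid P) : ∃ v, IsApex P v := by
  obtain ⟨B, v, -, hv, rfl⟩ := h
  refine ⟨v, ?_, fun hmem ↦ hv (affineSpan_mono ℝ ?_ hmem)⟩
  · rw [union_singleton]
    exact mem_extremePoints_convexHull_insert fun h ↦ hv (convexHull_subset_affineSpan B h)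
  · rintro x ⟨hx, hxv⟩
    exact (extremePoints_convexHull_subset hx).resolve_right hxv

theorem IsPolytope.isPyramid_of_isApex {P : Set E} (hP : IsPolytope P) (hd : 1 ≤ pdim P) {v : E}
    (hv : IsApex P v) : IsPyramid P := by
  obtain ⟨S, -, rfl⟩ := hP
  set V := (convexHull ℝ (S : Set E)).extremePoints ℝ
  have hfin : (V \ {v}).Finite := (S.finite_toSet.subset extremePoints_convexHull_subset).sdiff
  have hne : (V \ {v}).Nonempty := by
    by_contra hV
    rw [not_nonempty_iff_eq_empty, sdiff_eq_empty] at hV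
    have hsub : (convexHull ℝ (S : Set E)).Subsingleton := by
      refine (subsingleton_singleton (a := v)).anti ?_
      rw [← convexHull_extremePoints_convexHull_finset, ← convexHull_singleton (𝕜 := ℝ) v]
      exact convexHull_mono hV
    rw [pdim, direction_affineSpan, vectorSpan_of_subsingleton ℝ hsub, finrank_bot] at hd
    omega
  refine ⟨convexHull ℝ (V \ {v}), v, ⟨hfin.toFinset, by simpa using hne, by simp⟩,
    by rw [affineSpan_convexHull]; exact hv.2, ?_⟩
  rw [convexHull_convexHull_union_left, sdiff_union_of_subset (singleton_subset_iff.2 hv.1),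
    convexHull_extremePoints_convexHull_finset]

theorem IsApex.of_isExtreme {A B : Set E} {v : E} (h : IsApex A v) (hAB : IsExtreme ℝ A B)
    (hv : v ∈ B) : IsApex B v := by
  refine ⟨hAB.extremePoints_eq ▸ ⟨hv, h.1⟩, fun hmem ↦ h.2 (affineSpan_mono ℝ ?_ hmem)⟩
  exact sdiff_subset_sdiff_left hAB.extremePoints_subset_extremePoints

theorem isApex_image_iff {f : E →ᵃ[ℝ] F} (hf : Injective f) {P : Set E} {v : E} :
    IsApex (f '' P) (f v) ↔ IsApex P v := by
  rw [IsApex, IsApex, ← f.image_extremePoints hf, hf.mem_set_image, ← image_singleton,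
    ← image_sdiff hf, ← AffineSubspace.map_span, AffineSubspace.mem_map_iff_mem_of_injective hf]

theorem IsPolytope.image {P : Set E} (hP : IsPolytope P) (f : E →ᵃ[ℝ] F) :
    IsPolytope (f '' P) := by
  classical
  obtain ⟨S, hS, rfl⟩ := hP
  exact ⟨S.image f, hS.image f, by rw [Finset.coe_image, f.image_convexHull]⟩

theorem IsPyramid.image {P : Set E} (hP : IsPyramid P) {f : E →ᵃ[ℝ] F} (hf : Injective f) :
    IsPyramid (f '' P) := by
  obtain ⟨B, v, hB, hv, rfl⟩ := hP
  refine ⟨f '' B, f v, hB.image f, ?_, ?_⟩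
  · rwa [← AffineSubspace.map_span, AffineSubspace.mem_map_iff_mem_of_injective hf]
  · rw [f.image_convexHull, image_union, image_singleton]

end Polytopes

section Join

variable {E : Type*} [AddCommGroup E] [Module ℝ E] {F : Type*} [AddCommGroup F] [Module ℝ F]

def joinInl : E →ᵃ[ℝ] E × F × ℝ := (LinearMap.inl ℝ E (F × ℝ)).toAffineMap

def joinInr : F →ᵃ[ℝ] E × F × ℝ where
  toFun q := (0, q, 1)
  linear := LinearMap.inr ℝ E (F × ℝ) ∘ₗ LinearMap.inl ℝ F ℝ
  map_vadd' q w := by simp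

def joinSwap : E × F × ℝ →ᵃ[ℝ] F × E × ℝ where
  toFun z := (z.2.1, z.1, 1 - z.2.2)
  linear := (LinearMap.fst ℝ F ℝ ∘ₗ LinearMap.snd ℝ E (F × ℝ)).prod
    ((LinearMap.fst ℝ E (F × ℝ)).prod (-(LinearMap.snd ℝ F ℝ ∘ₗ LinearMap.snd ℝ E (F × ℝ))))
  map_vadd' z w := by simp [neg_add_eq_sub]; ring

@[simp] theorem joinInl_apply (p : E) : joinInl (F := F) p = (p, 0, 0) := rfl

@[simp] theorem joinInr_apply (q : F) : joinInr (E := E) q = (0, q, 1) := rfl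

@[simp] theorem joinSwap_apply (z : E × F × ℝ) : joinSwap z = (z.2.1, z.1, 1 - z.2.2) := rfl

theorem joinInl_injective : Injective (joinInl (E := E) (F := F)) :=
  LinearMap.inl_injective

theorem joinSwap_injective : Injective (joinSwap (E := E) (F := F)) := by
  rintro ⟨x, y, t⟩ ⟨x', y', t'⟩ h
  simp only [joinSwap_apply, Prod.mk.injEq, sub_right_inj] at h
  simp [h]

theorem polyJoin_eq_convexHull (P : Set E) (Q : Set F) :
    polyJoin P Q = convexHull ℝ (joinInl '' P ∪ joinInr '' Q) := rfl

theorem image_joinSwap_polyJoin (P : Set E) (Q : Set F) :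
    joinSwap '' polyJoin P Q = polyJoin Q P := by
  simp only [polyJoin_eq_convexHull, joinSwap.image_convexHull, image_union, image_image,
    joinSwap_apply, joinInl_apply, joinInr_apply, sub_zero, sub_self, union_comm]
  rfl

theorem polyJoin_convexHull_convexHull (s : Set E) (t : Set F) :
    polyJoin (convexHull ℝ s) (convexHull ℝ t) = polyJoin s t := by
  rw [polyJoin_eq_convexHull, joinInl.image_convexHull, joinInr.image_convexHull,
    convexHull_convexHull_union_left, convexHull_convexHull_union_right, polyJoin_eq_convexHull]

theorem IsPolytope.polyJoin {P : Set E} {Q : Set F} (hP : IsPolytope P) (hQ : IsPolytope Q) :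
    IsPolytope (polyJoin P Q) := by
  classical
  obtain ⟨S, hS, rfl⟩ := hP
  obtain ⟨T, -, rfl⟩ := hQ
  refine ⟨S.image joinInl ∪ T.image joinInr, hS.image _ |>.mono Finset.subset_union_left, ?_⟩
  rw [polyJoin_convexHull_convexHull, Finset.coe_union, Finset.coe_image, Finset.coe_image,
    polyJoin_eq_convexHull]

theorem mem_polyJoin_iff {P : Set E} {Q : Set F} (hPc : Convex ℝ P) (hQc : Convex ℝ Q)
    (hPne : P.Nonempty) (hQne : Q.Nonempty) {z : E × F × ℝ} :
    z ∈ polyJoin P Q ↔ ∃ p ∈ P, ∃ q ∈ Q, ∃ a b : ℝ,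
      0 ≤ a ∧ 0 ≤ b ∧ a + b = 1 ∧ z = (a • p, b • q, b) := by
  rw [polyJoin_eq_convexHull, (hPc.affine_image joinInl).convexHull_union
    (hQc.affine_image joinInr) (hPne.image _) (hQne.image _), mem_convexJoin]
  simp only [exists_mem_image, segment, mem_ofPred_eq, joinInl_apply, joinInr_apply]
  constructor
  · rintro ⟨p, hp, q, hq, a, b, ha, hb, hab, rfl⟩
    exact ⟨p, hp, q, hq, a, b, ha, hb, hab, by simp⟩
  · rintro ⟨p, hp, q, hq, a, b, ha, hb, hab, rfl⟩
    exact ⟨p, hp, q, hq, a, b, ha, hb, hab, by simp⟩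

theorem isExtreme_sep_eq_zero_of_nonneg {A : Set E} (l : E →ₗ[ℝ] ℝ) (hl : ∀ x ∈ A, 0 ≤ l x) :
    IsExtreme ℝ A {x ∈ A | l x = 0} := by
  refine ⟨sep_subset _ _, fun x₁ hx₁ x₂ hx₂ x ⟨_, hx⟩ ⟨a, b, ha, hb, _, hab⟩ ↦ ⟨hx₁, ?_⟩⟩
  have : a * l x₁ + b * l x₂ = 0 := by simpa [← hab] using hx
  have := hl x₁ hx₁
  have := hl x₂ hx₂
  nlinarith

theorem polyJoin_sep_eq_zero {P : Set E} {Q : Set F} (hPc : Convex ℝ P) (hQc : Convex ℝ Q)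
    (hPne : P.Nonempty) (hQne : Q.Nonempty) :
    {z ∈ polyJoin P Q | z.2.2 = 0} = joinInl (F := F) '' P := by
  ext z
  constructor
  · rintro ⟨hz, hz0⟩
    obtain ⟨p, hp, q, -, a, b, -, -, hab, rfl⟩ := (mem_polyJoin_iff hPc hQc hPne hQne).1 hz
    obtain rfl : b = 0 := hz0
    obtain rfl : a = 1 := by simpa using hab
    exact ⟨p, hp, by simp⟩
  · rintro ⟨p, hp, rfl⟩
    exact ⟨subset_convexHull ℝ _ (mem_union_left _ (mem_image_of_mem _ hp)), rfl⟩

theorem isExtreme_polyJoin_image_joinInl {P : Set E} {Q : Set F} (hPc : Convex ℝ P)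
    (hQc : Convex ℝ Q) (hPne : P.Nonempty) (hQne : Q.Nonempty) :
    IsExtreme ℝ (polyJoin P Q) (joinInl (F := F) '' P) := by
  rw [← polyJoin_sep_eq_zero hPc hQc hPne hQne]
  refine isExtreme_sep_eq_zero_of_nonneg (LinearMap.snd ℝ F ℝ ∘ₗ LinearMap.snd ℝ E (F × ℝ))
    fun z hz ↦ ?_
  obtain ⟨p, -, q, -, a, b, -, hb, -, rfl⟩ := (mem_polyJoin_iff hPc hQc hPne hQne).1 hz
  exact hb

theorem IsApex.of_polyJoin_joinInl {P : Set E} {Q : Set F} (hPc : Convex ℝ P)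
    (hQc : Convex ℝ Q) (hPne : P.Nonempty) (hQne : Q.Nonempty) {v : E}
    (h : IsApex (polyJoin P Q) (joinInl v)) : IsApex P v := by
  have hface := isExtreme_polyJoin_image_joinInl hPc hQc hPne hQne
  have hv : joinInl (F := F) v ∈ joinInl '' P := by
    rw [← polyJoin_sep_eq_zero hPc hQc hPne hQne]
    exact ⟨h.1.1, rfl⟩
  exact (isApex_image_iff joinInl_injective).1 (h.of_isExtreme hface hv)

theorem IsApex.of_polyJoin_joinInr {P : Set E} {Q : Set F} (hPc : Convex ℝ P)
    (hQc : Convex ℝ Q) (hPne : P.Nonempty) (hQne : Q.Nonempty) {u : F}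
    (h : IsApex (polyJoin P Q) (joinInr u)) : IsApex Q u := by
  have := (isApex_image_iff joinSwap_injective).2 h
  rw [image_joinSwap_polyJoin, show joinSwap (joinInr u) = joinInl u by simp] at this
  exact this.of_polyJoin_joinInl hQc hPc hQne hPne

theorem IsPyramid.polyJoin_left {P : Set E} {Q : Set F} (hP : IsPyramid P) (hQ : IsPolytope Q) :
    IsPyramid (polyJoin P Q) := by
  obtain ⟨B, v, hB, hv, rfl⟩ := hP
  obtain ⟨p₀, hp₀⟩ := hB.nonempty
  refine ⟨polyJoin B Q, joinInl v, hB.polyJoin hQ, fun hmem ↦ hv ?_, ?_⟩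
  · let r : E × F × ℝ →ᵃ[ℝ] E := (LinearMap.fst ℝ E (F × ℝ) +
      (LinearMap.snd ℝ F ℝ ∘ₗ LinearMap.snd ℝ E (F × ℝ)).smulRight p₀).toAffineMap
    have hr : MapsTo r (joinInl '' B ∪ joinInr '' Q) (affineSpan ℝ B) := by
      rintro _ (⟨p, hp, rfl⟩ | ⟨q, -, rfl⟩)
      · simpa [r] using subset_affineSpan ℝ B hp
      · simpa [r] using subset_affineSpan ℝ B hp₀
    rw [polyJoin_eq_convexHull, affineSpan_convexHull] at hmem
    have := AffineSubspace.mem_map_of_mem r hmem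
    rw [AffineSubspace.map_span] at this
    simpa [r] using affineSpan_le.2 hr.image_subset this
  · rw [polyJoin_eq_convexHull, polyJoin_eq_convexHull, convexHull_convexHull_union_left,
      joinInl.image_convexHull, image_union, image_singleton, convexHull_convexHull_union_left,
      union_right_comm]

theorem IsPyramid.polyJoin_right {P : Set E} {Q : Set F} (hQ : IsPyramid Q) (hP : IsPolytope P) :
    IsPyramid (polyJoin P Q) :=
  image_joinSwap_polyJoin Q P ▸ (hQ.polyJoin_left hP).image joinSwap_injective

end Join

/-- A join of two polytopes, each of dimension at least 1, is a pyramid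
iff one of the two factors is a pyramid. -/
theorem stmt19 {E : Type*} [AddCommGroup E] [Module ℝ E] {F : Type*} [AddCommGroup F] [Module ℝ F]
    (P : Set E) (Q : Set F) (hP : IsPolytope P) (hQ : IsPolytope Q)
    (hdP : 1 ≤ pdim P) (hdQ : 1 ≤ pdim Q) :
    IsPyramid (polyJoin P Q) ↔ IsPyramid P ∨ IsPyramid Q := by
  constructor
  · intro hJ
    obtain ⟨w, hw⟩ := hJ.exists_isApex
    rcases extremePoints_convexHull_subset hw.1 with ⟨v, -, rfl⟩ | ⟨u, -, rfl⟩
    · exact .inl <| hP.isPyramid_of_isApex hdP <|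
        hw.of_polyJoin_joinInl hP.convex hQ.convex hP.nonempty hQ.nonempty
    · exact .inr <| hQ.isPyramid_of_isApex hdQ <|
        hw.of_polyJoin_joinInr hP.convex hQ.convex hP.nonempty hQ.nonempty
  · rintro (hP' | hQ')
    · exact hP'.polyJoin_left hQ
    · exact hQ'.polyJoin_right hP
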